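/- Similarly, in the position term of vanilla Transformer attention, PE_t^T W_q^T W_k PE_{t+k} can be written as PE_t^T W PE_{t+k} for W = W_q^T W_k; in general this quantity depends on t (not only on the offset k): there exist d, sinusoidal embeddings PE, a matrix W ∈ ℝ^{d×d}, an offset k, and positions t ≠ t' with PE_t^T W PE_{t+k} ≠ PE_{t'}^T W PE_{t'+k}. However, if W is block-diagonal with 2×2 blocks of the form a·I₂ + b·J (J the 2×2 rotation by 90°) in each sine–cosine pair, then PE_t^T W PE_{t+k} depends only on k. -/
import Mathlib


open Real Finset

lemma sum_pair (g : ℕ → ℝ) (m : ℕ) :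
    ∑ j ∈ Finset.range (2 * m), g j = ∑ i ∈ Finset.range m, (g (2 * i) + g (2 * i + 1)) := by
  induction m with
  | zero => simp
  | succ n ih =>
    rw [show 2 * (n + 1) = 2 * n + 1 + 1 by ring, Finset.sum_range_succ, Finset.sum_range_succ,
      ih, Finset.sum_range_succ]
    ring

lemma key (m : ℕ) (c : ℕ → ℝ) (PE : ℝ → ℕ → ℝ)
    (hs : ∀ t i, PE t (2 * i) = Real.sin (c i * t))
    (hc : ∀ t i, PE t (2 * i + 1) = Real.cos (c i * t))
    (W : ℕ → ℕ → ℝ) (a b : ℕ → ℝ)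
    (hW : ∀ i, W (2 * i) (2 * i) = a i ∧ W (2 * i) (2 * i + 1) = b i ∧
              W (2 * i + 1) (2 * i) = -b i ∧ W (2 * i + 1) (2 * i + 1) = a i)
    (hW0 : ∀ j j', j / 2 ≠ j' / 2 → W j j' = 0) (k t : ℝ) :
    (∑ j ∈ Finset.range (2 * m), ∑ j' ∈ Finset.range (2 * m),
        PE t j * W j j' * PE (t + k) j') =
      ∑ i ∈ Finset.range m, (a i * Real.cos (c i * k) - b i * Real.sin (c i * k)) := by
  rw [sum_pair (fun j => ∑ j' ∈ Finset.range (2 * m), PE t j * W j j' * PE (t + k) j') m]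
  apply Finset.sum_congr rfl
  intro i hi
  rw [sum_pair (fun j' => PE t (2 * i) * W (2 * i) j' * PE (t + k) j') m,
    sum_pair (fun j' => PE t (2 * i + 1) * W (2 * i + 1) j' * PE (t + k) j') m,
    ← Finset.sum_add_distrib, Finset.sum_eq_single i]
  · obtain ⟨h1, h2, h3, h4⟩ := hW i
    rw [h1, h2, h3, h4, hs, hs, hc, hc,
      show c i * (t + k) = c i * t + c i * k by ring, Real.sin_add, Real.cos_add]
    linear_combination (a i * Real.cos (c i * k) - b i * Real.sin (c i * k)) *
      Real.sin_sq_add_cos_sq (c i * t)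
  · intro i' _ hne
    rw [hW0 (2 * i) (2 * i') (by omega), hW0 (2 * i) (2 * i' + 1) (by omega),
      hW0 (2 * i + 1) (2 * i') (by omega), hW0 (2 * i + 1) (2 * i' + 1) (by omega)]
    ring
  · intro h; exact absurd hi h

theorem projected_position_dot_product
    : (∃ (m : ℕ) (c : ℕ → ℝ) (PE : ℝ → ℕ → ℝ),
        0 < m ∧
        (∀ t i, PE t (2 * i) = Real.sin (c i * t)) ∧
        (∀ t i, PE t (2 * i + 1) = Real.cos (c i * t)) ∧
        ∃ (W : ℕ → ℕ → ℝ) (k t t' : ℝ), t ≠ t' ∧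
          (∑ j ∈ Finset.range (2 * m), ∑ j' ∈ Finset.range (2 * m),
              PE t j * W j j' * PE (t + k) j') ≠
          (∑ j ∈ Finset.range (2 * m), ∑ j' ∈ Finset.range (2 * m),
              PE t' j * W j j' * PE (t' + k) j')) ∧
      (∀ (m : ℕ) (c : ℕ → ℝ) (PE : ℝ → ℕ → ℝ),
        (∀ t i, PE t (2 * i) = Real.sin (c i * t)) →
        (∀ t i, PE t (2 * i + 1) = Real.cos (c i * t)) →
        ∀ (W : ℕ → ℕ → ℝ) (a b : ℕ → ℝ),
        (∀ i, W (2 * i) (2 * i) = a i ∧ W (2 * i) (2 * i + 1) = b i ∧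
              W (2 * i + 1) (2 * i) = -b i ∧ W (2 * i + 1) (2 * i + 1) = a i) →
        (∀ j j', j / 2 ≠ j' / 2 → W j j' = 0) →
        ∀ (k t t' : ℝ),
          (∑ j ∈ Finset.range (2 * m), ∑ j' ∈ Finset.range (2 * m),
              PE t j * W j j' * PE (t + k) j') =
          (∑ j ∈ Finset.range (2 * m), ∑ j' ∈ Finset.range (2 * m),
              PE t' j * W j j' * PE (t' + k) j')) := by
  constructor
  · refine ⟨1, fun _ => 1, fun t n => if n % 2 = 0 then Real.sin t else Real.cos t,
      one_pos, by intro t i; simp [Nat.mul_mod_right], by intro t i; simp [Nat.add_mul_mod_self_left, Nat.mul_add_mod],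
      fun j j' => if j = 0 ∧ j' = 0 then 1 else 0, 0, Real.pi / 2, 0, ?_, ?_⟩
    · positivity
    · simp [Finset.sum_range_succ]
  · intro m c PE hs hc W a b hW hW0 k t t'
    rw [key m c PE hs hc W a b hW hW0 k t, key m c PE hs hc W a b hW hW0 k t']
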